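/- Let f be a bounded measurable function on [0,∞) with f > ε almost everywhere and |f(r) − 1| ≤ J e^{−ar} almost everywhere for some a > 2 and J > 0. If λ solves λ' + λ² = f with λ(0) > 0, then λ is positive and there exists C > 0 such that |λ(r) − 1| ≤ C e^{−2r} for all r > 0. -/

import Mathlib

/-!
With `u = λ - 1` and `p = λ + 1` the Riccati equation is the linear equation
`u' = (f - 1) - p u`, and variation of constants,
`u r = exp (-∫₀ʳ p) u 0 + ∫₀ʳ exp (-∫ₜʳ p) (f t - 1) dt`,
turns a lower bound `∫ₛʳ p ≥ c (r - s) - I` into `|u r| ≤ C e^{-c r}` for every `c < a`.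
The same formula for `λ' = f - λ · λ` shows `λ > 0`, so `p ≥ 1` and `u` decays at rate `1`.
Then `p = 2 + u` differs from `2` by an integrable error, which upgrades the rate to `2`.
-/

open MeasureTheory Real Set intervalIntegral

theorem eq_exp_neg_integral_mul_add_integral_of_hasDerivAt {u p g : ℝ → ℝ} {t₀ r : ℝ}
    (hr : t₀ ≤ r) (hu : ∀ t ∈ Icc t₀ r, HasDerivAt u (g t - p t * u t) t)
    (hp : ContinuousOn p (Icc t₀ r)) (hg : IntervalIntegrable g volume t₀ r) :
    u r = exp (-∫ s in t₀..r, p s) * u t₀ +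
      ∫ t in t₀..r, exp (-∫ s in t..r, p s) * g t := by
  set P : ℝ → ℝ := fun t => ∫ s in t₀..t, p s with hP
  have hp_int : ∀ t ∈ Icc t₀ r, IntervalIntegrable p volume t₀ t := fun t ht =>
    (hp.mono (Icc_subset_Icc_right ht.2)).intervalIntegrable_of_Icc ht.1
  have hP_cont : ContinuousOn P (uIcc t₀ r) :=
    continuousOn_primitive_interval (by rw [uIcc_of_le hr]; exact hp.integrableOn_Icc)
  have hP_deriv : ∀ t ∈ Ioo t₀ r, HasDerivAt P (p t) t := fun t ht =>
    integral_hasDerivAt_right (hp_int t (Ioo_subset_Icc_self ht))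
      (ContinuousOn.stronglyMeasurableAtFilter isOpen_Ioo (hp.mono Ioo_subset_Icc_self) t ht)
      (hp.continuousAt (Icc_mem_nhds ht.1 ht.2))
  have hFTC : u r * exp (P r) - u t₀ * exp (P t₀) = ∫ t in t₀..r, g t * exp (P t) := by
    refine (integral_eq_sub_of_hasDerivAt_of_le (f := fun t => u t * exp (P t)) hr ?_
      (fun t ht => ?_) ?_).symm
    · rw [uIcc_of_le hr] at hP_cont
      exact (continuousOn_of_forall_continuousAt fun t ht => (hu t ht).continuousAt).mul
        (continuous_exp.comp_continuousOn hP_cont)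
    · exact ((hu t (Ioo_subset_Icc_self ht)).mul (hP_deriv t ht).exp).congr_deriv (by ring)
    · exact hg.mul_continuousOn (continuous_exp.comp_continuousOn hP_cont)
  have hP_sub : ∀ t ∈ uIcc t₀ r, P t + -P r = -∫ s in t..r, p s := by
    intro t ht
    rw [uIcc_of_le hr] at ht
    rw [hP, ← integral_interval_sub_left (hp_int r ⟨hr, le_rfl⟩) (hp_int t ht)]
    ring
  have hP₀ : P t₀ = 0 := integral_same
  calc u r = exp (-P r) * (u t₀ * exp (P t₀) + ∫ t in t₀..r, g t * exp (P t)) := by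
        rw [← hFTC, add_sub_cancel, mul_left_comm, ← exp_add, neg_add_cancel, exp_zero, mul_one]
    _ = exp (-P r) * u t₀ + ∫ t in t₀..r, exp (P t + -P r) * g t := by
        simp only [hP₀, exp_zero, mul_one, mul_add, ← intervalIntegral.integral_const_mul,
          exp_add]
        exact congrArg _ (integral_congr fun t _ => by ring)
    _ = _ := by
        congr 1
        exact integral_congr fun t ht => by simp only [hP_sub t ht]

theorem integral_exp_neg_mul_le {k s r : ℝ} (hk : 0 < k) (hs : 0 ≤ s) :
    ∫ t in s..r, exp (-k * t) ≤ 1 / k := by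
  have h_eval : ∫ t in s..r, exp (-k * t) = (exp (-k * s) - exp (-k * r)) / k := by
    rw [integral_comp_mul_left (fun t => exp t) (neg_ne_zero.2 hk.ne'), integral_exp, smul_eq_mul,
      inv_neg, div_eq_inv_mul]
    ring
  have h_start : exp (-k * s) ≤ 1 := exp_le_one_iff.2 (by nlinarith)
  rw [h_eval]
  gcongr
  linarith [exp_pos (-k * r)]

theorem sub_div_le_integral_of_sub_mul_exp_le {p : ℝ → ℝ} {c B k s r : ℝ} (hk : 0 < k)
    (hB : 0 ≤ B) (hs : 0 ≤ s) (hsr : s ≤ r) (hp : IntervalIntegrable p volume s r)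
    (h : ∀ t ∈ Icc s r, c - B * exp (-k * t) ≤ p t) :
    c * (r - s) - B / k ≤ ∫ t in s..r, p t := by
  have h_exp_int : IntervalIntegrable (fun t => exp (-k * t)) volume s r :=
    Continuous.intervalIntegrable (by fun_prop) s r
  calc c * (r - s) - B / k
      ≤ c * (r - s) - B * ∫ t in s..r, exp (-k * t) := by
        rw [← mul_one_div]
        gcongr
        exact integral_exp_neg_mul_le hk hs
    _ = ∫ t in s..r, (c - B * exp (-k * t)) := by
        rw [integral_sub intervalIntegrable_const (h_exp_int.const_mul B),
          intervalIntegral.integral_const_mul, intervalIntegral.integral_const, smul_eq_mul,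
          mul_comm]
    _ ≤ ∫ t in s..r, p t :=
        integral_mono_on hsr (intervalIntegrable_const.sub (h_exp_int.const_mul B)) hp h

theorem intervalIntegrable_of_abs_le_mul_exp {g : ℝ → ℝ} {a J r : ℝ} (hr : 0 ≤ r)
    (hg_meas : AEStronglyMeasurable g (volume.restrict (Ici 0)))
    (hg : ∀ᵐ t ∂(volume.restrict (Ici 0)), |g t| ≤ J * exp (-a * t)) :
    IntervalIntegrable g volume 0 r := by
  have h_sub : uIoc 0 r ⊆ Ici 0 := by
    rw [uIoc_of_le hr]
    exact Ioc_subset_Icc_self.trans Icc_subset_Ici_self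
  exact (Continuous.intervalIntegrable (by fun_prop) 0 r).mono_fun' (hg_meas.mono_set h_sub)
    (ae_restrict_of_ae_restrict_of_subset h_sub hg)

theorem abs_le_of_hasDerivAt_of_le_integral {u p g : ℝ → ℝ} {a c I J r : ℝ} (hr : 0 ≤ r)
    (hca : c < a) (hJ : 0 ≤ J) (hu : ∀ t ∈ Icc 0 r, HasDerivAt u (g t - p t * u t) t)
    (hp : ContinuousOn p (Icc 0 r))
    (hg_meas : AEStronglyMeasurable g (volume.restrict (Ici 0)))
    (hg : ∀ᵐ t ∂(volume.restrict (Ici 0)), |g t| ≤ J * exp (-a * t))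
    (hP : ∀ s ∈ Icc 0 r, c * (r - s) - I ≤ ∫ t in s..r, p t) :
    |u r| ≤ exp I * (|u 0| + J / (a - c)) * exp (-c * r) := by
  have hP_exp : ∀ s ∈ Icc 0 r,
      exp (-∫ t in s..r, p t) ≤ exp I * exp (-c * r) * exp (c * s) := fun s hs => by
    rw [← exp_add, ← exp_add]
    exact exp_le_exp.2 (by linarith [hP s hs])
  have h_initial : exp (-∫ t in 0..r, p t) * |u 0| ≤ exp I * exp (-c * r) * |u 0| := by
    simpa using mul_le_mul_of_nonneg_right (hP_exp 0 ⟨le_rfl, hr⟩) (abs_nonneg (u 0))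
  have h_forcing : |∫ t in 0..r, exp (-∫ s in t..r, p s) * g t| ≤
      exp I * exp (-c * r) * J * ∫ t in 0..r, exp (-(a - c) * t) := by
    rw [← Real.norm_eq_abs, ← intervalIntegral.integral_const_mul]
    refine norm_integral_le_of_norm_le hr ?_ (Continuous.intervalIntegrable ?_ _ _)
    swap; · fun_prop
    filter_upwards [(ae_restrict_iff' measurableSet_Ici).1 hg] with t ht ht_mem
    rw [Real.norm_eq_abs, abs_mul, abs_of_pos (exp_pos _)]
    calc exp (-∫ s in t..r, p s) * |g t|
        ≤ exp I * exp (-c * r) * exp (c * t) * (J * exp (-a * t)) :=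
          mul_le_mul (hP_exp t (Ioc_subset_Icc_self ht_mem)) (ht ht_mem.1.le) (abs_nonneg _)
            (by positivity)
      _ = exp I * exp (-c * r) * J * exp (-(a - c) * t) := by
          rw [show -(a - c) * t = c * t + -a * t by ring, exp_add]
          ring
  calc |u r|
      ≤ exp (-∫ t in 0..r, p t) * |u 0| + |∫ t in 0..r, exp (-∫ s in t..r, p s) * g t| := by
        rw [eq_exp_neg_integral_mul_add_integral_of_hasDerivAt hr hu hp
          (intervalIntegrable_of_abs_le_mul_exp hr hg_meas hg)]
        refine (abs_add_le _ _).trans_eq ?_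
        rw [abs_mul, abs_of_pos (exp_pos _)]
    _ ≤ exp I * exp (-c * r) * |u 0| + exp I * exp (-c * r) * J * (1 / (a - c)) :=
        add_le_add h_initial (h_forcing.trans (mul_le_mul_of_nonneg_left
          (integral_exp_neg_mul_le (sub_pos.2 hca) le_rfl) (by positivity)))
    _ = _ := by ring

section Riccati

variable {f lam : ℝ → ℝ}

theorem riccati_pos (hf_int : ∀ r ≥ (0:ℝ), IntervalIntegrable f volume 0 r)
    (hf_nonneg : ∀ᵐ r ∂(volume.restrict (Ici (0:ℝ))), 0 ≤ f r)
    (hlam : ∀ r ≥ (0:ℝ), HasDerivAt lam (f r - lam r ^ 2) r) (h0 : 0 < lam 0) :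
    ∀ r ≥ (0:ℝ), 0 < lam r := by
  intro r hr
  rw [eq_exp_neg_integral_mul_add_integral_of_hasDerivAt hr
    (fun t ht => (hlam t ht.1).congr_deriv (by ring))
    (fun t ht => (hlam t ht.1).continuousAt.continuousWithinAt) (hf_int r hr)]
  refine add_pos_of_pos_of_nonneg (mul_pos (exp_pos _) h0) (integral_nonneg_of_ae_restrict hr ?_)
  filter_upwards [ae_restrict_of_ae_restrict_of_subset Icc_subset_Ici_self hf_nonneg] with t ht
  exact mul_nonneg (exp_pos _).le ht

theorem riccati_abs_sub_one_le {a c k B J r : ℝ} (hr : 0 ≤ r) (hca : c < a) (hk : 0 < k)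
    (hB : 0 ≤ B) (hJ : 0 ≤ J) (hf_meas : Measurable f)
    (hf_close : ∀ᵐ t ∂(volume.restrict (Ici (0:ℝ))), |f t - 1| ≤ J * exp (-a * t))
    (hlam : ∀ t ≥ (0:ℝ), HasDerivAt lam (f t - lam t ^ 2) t)
    (h_lower : ∀ t ∈ Icc 0 r, c - B * exp (-k * t) ≤ lam t + 1) :
    |lam r - 1| ≤ exp (B / k) * (|lam 0 - 1| + J / (a - c)) * exp (-c * r) := by
  have hp : ContinuousOn (fun t => lam t + 1) (Ici 0) := fun t ht =>
    ((hlam t ht).continuousAt.add continuousAt_const).continuousWithinAt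
  refine abs_le_of_hasDerivAt_of_le_integral (u := fun t => lam t - 1) hr hca hJ
    (fun t ht => ((hlam t ht.1).sub_const 1).congr_deriv (by ring))
    (hp.mono Icc_subset_Ici_self) (hf_meas.sub_const 1).aestronglyMeasurable hf_close
    fun s hs => sub_div_le_integral_of_sub_mul_exp_le hk hB hs.1 hs.2 ?_
      fun t ht => h_lower t ⟨hs.1.trans ht.1, ht.2⟩
  exact (hp.mono fun t ht => hs.1.trans ht.1).intervalIntegrable_of_Icc hs.2

end Riccati

theorem riccati_decay_a_gt_two_general
    (a J ε : ℝ) (ha : 2 < a) (hJ : 0 < J) (hε : 0 < ε)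
    (f lam : ℝ → ℝ)
    (hf_meas : Measurable f)
    (hf_pos : ∀ᵐ r ∂(volume.restrict (Ici (0:ℝ))), ε < f r)
    (hf_close : ∀ᵐ r ∂(volume.restrict (Ici (0:ℝ))), |f r - 1| ≤ J * exp (-a * r))
    (hlam : ∀ r ≥ (0:ℝ), HasDerivAt lam (f r - lam r ^ 2) r)
    (h0 : 0 < lam 0) :
    (∀ r ≥ (0:ℝ), 0 < lam r) ∧
      ∃ C > 0, ∀ r > (0:ℝ), |lam r - 1| ≤ C * exp (-2 * r) := by
  have hf_int : ∀ r ≥ (0:ℝ), IntervalIntegrable f volume 0 r := fun r hr => by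
    simpa using (intervalIntegrable_of_abs_le_mul_exp hr
      (hf_meas.sub_const 1).aestronglyMeasurable hf_close).add
      (intervalIntegrable_const (c := (1:ℝ)))
  have hpos : ∀ r ≥ (0:ℝ), 0 < lam r :=
    riccati_pos hf_int (hf_pos.mono fun r hr => hε.le.trans hr.le) hlam h0
  set B := |lam 0 - 1| + J / (a - 1)
  have h_rate_one : ∀ r ≥ (0:ℝ), |lam r - 1| ≤ B * exp (-1 * r) := fun r hr => by
    simpa using riccati_abs_sub_one_le (c := 1) (k := 1) (B := 0) hr (by linarith) one_pos le_rfl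
      hJ.le hf_meas hf_close hlam fun t ht => by linarith [hpos t ht.1]
  have hB : 0 ≤ B := add_nonneg (abs_nonneg _) (div_nonneg hJ.le (by linarith))
  refine ⟨hpos, exp B * (|lam 0 - 1| + J / (a - 2)),
    mul_pos (exp_pos B) (add_pos_of_nonneg_of_pos (abs_nonneg _) (div_pos hJ (by linarith))),
    fun r hr => ?_⟩
  simpa using riccati_abs_sub_one_le (k := 1) hr.le ha one_pos hB hJ.le hf_meas hf_close hlam
    fun t ht => by linarith [h_rate_one t ht.1, neg_abs_le (lam t - 1)]

/-- Lemma on the scalar Riccati equation, case `a > 2`: if `f` is bounded, measurable,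
`f > ε` a.e. and `|f - 1| ≤ J e^{-ar}` a.e. on `[0,∞)` with `a > 2`, and `λ' + λ² = f` with
`λ(0) > 0`, then `λ` is positive and `|λ - 1| ≤ C e^{-2r}`. -/
theorem riccati_decay_a_gt_two
    (a J ε : ℝ) (ha : 2 < a) (hJ : 0 < J) (hε : 0 < ε)
    (f lam : ℝ → ℝ)
    (hf_meas : Measurable f)
    (hf_bdd : ∃ M : ℝ, ∀ r ≥ (0:ℝ), |f r| ≤ M)
    (hf_pos : ∀ᵐ r ∂(volume.restrict (Ici (0:ℝ))), ε < f r)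
    (hf_close : ∀ᵐ r ∂(volume.restrict (Ici (0:ℝ))), |f r - 1| ≤ J * exp (-a * r))
    (hlam : ∀ r ≥ (0:ℝ), HasDerivAt lam (f r - lam r ^ 2) r)
    (h0 : 0 < lam 0) :
    (∀ r ≥ (0:ℝ), 0 < lam r) ∧
      ∃ C > 0, ∀ r > (0:ℝ), |lam r - 1| ≤ C * exp (-2 * r) :=
  riccati_decay_a_gt_two_general a J ε ha hJ hε f lam hf_meas hf_pos hf_close hlam h0
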